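/- Let M be an n×n self-adjoint positive semi-definite complex matrix. Then the matrix M∘M̄ − (1/n)(diag M)(diag M)^T, whose (j,k) entry is |M_{j,k}|² − (1/n)M_{j,j}M_{k,k}, is positive semi-definite. -/

import Mathlib

/-!
Write `M = Sᴴ S` and, for a test vector `x`, put `B = S diag(x) Sᴴ`. For Hermitian `M` the
matrix `M ∘ M̄` is `M ⊙ Mᵀ`, whose quadratic form at `x` is
`tr (diag(x̄) M diag(x) M) = tr (Bᴴ B)`, while `(diag M)ᵀ x = tr B`. The claim thus becomes
the Cauchy–Schwarz bound `|tr B|² ≤ n ‖B‖_F²`.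
-/

open scoped ComplexOrder
open Matrix

namespace Matrix

variable {ι κ 𝕜 : Type*} [RCLike 𝕜]

lemma IsHermitian.star_diag {M : Matrix ι ι 𝕜} (hM : M.IsHermitian) : star M.diag = M.diag :=
  funext fun i ↦ hM.apply i i

lemma IsHermitian.hadamard_transpose_apply {M : Matrix ι ι 𝕜} (hM : M.IsHermitian) (i j : ι) :
    (M ⊙ Mᵀ) i j = (‖M i j‖ : 𝕜) ^ 2 := by
  rw [hadamard_apply, transpose_apply, ← hM.apply j i, RCLike.star_def, RCLike.mul_conj]

variable [Fintype ι] [Fintype κ]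

lemma norm_trace_sq_le_card_mul_sum_norm_sq (B : Matrix ι ι 𝕜) :
    ‖trace B‖ ^ 2 ≤ Fintype.card ι * ∑ i, ∑ j, ‖B i j‖ ^ 2 :=
  calc ‖trace B‖ ^ 2 ≤ (∑ i, ‖B i i‖) ^ 2 := by gcongr; exact norm_sum_le _ _
    _ ≤ Fintype.card ι * ∑ i, ‖B i i‖ ^ 2 := sq_sum_le_card_mul_sum_sq
    _ ≤ Fintype.card ι * ∑ i, ∑ j, ‖B i j‖ ^ 2 := by
      gcongr with i
      exact Finset.single_le_sum (f := fun j ↦ ‖B i j‖ ^ 2) (fun _ _ ↦ by positivity)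
        (Finset.mem_univ i)

lemma trace_conjTranspose_mul_self_eq_sum_norm_sq (B : Matrix ι ι 𝕜) :
    trace (Bᴴ * B) = ((∑ i, ∑ j, ‖B i j‖ ^ 2 : ℝ) : 𝕜) := by
  rw [trace, Finset.sum_comm]
  push_cast
  simp [mul_apply, RCLike.conj_mul]

lemma inv_card_mul_star_trace_mul_trace_le_trace_conjTranspose_mul_self (B : Matrix ι ι 𝕜) :
    (Fintype.card ι : 𝕜)⁻¹ * (star (trace B) * trace B) ≤ trace (Bᴴ * B) := by
  rw [trace_conjTranspose_mul_self_eq_sum_norm_sq, RCLike.star_def, RCLike.conj_mul,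
    ← RCLike.ofReal_natCast, ← RCLike.ofReal_inv, ← RCLike.ofReal_pow, ← RCLike.ofReal_mul,
    RCLike.ofReal_le_ofReal, inv_mul_eq_div]
  exact div_le_of_le_mul₀ (by positivity) (by positivity)
    (mul_comm (Fintype.card ι : ℝ) _ ▸ norm_trace_sq_le_card_mul_sum_norm_sq B)

lemma IsHermitian.star_dotProduct_vecMulVec_diag_mulVec {M : Matrix ι ι 𝕜} (hM : M.IsHermitian)
    (x : ι → 𝕜) :
    star x ⬝ᵥ (vecMulVec M.diag M.diag *ᵥ x) = star (M.diag ⬝ᵥ x) * (M.diag ⬝ᵥ x) := by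
  rw [vecMulVec_mulVec, dotProduct_smul, star_dotProduct, hM.star_diag]
  simp [mul_comm]

lemma diag_conjTranspose_mul_self_dotProduct [DecidableEq ι] (A : Matrix κ ι 𝕜) (x : ι → 𝕜) :
    (Aᴴ * A).diag ⬝ᵥ x = trace (A * diagonal x * Aᴴ) := by
  rw [trace_mul_cycle]
  simp [trace, dotProduct, mul_diagonal]

lemma star_dotProduct_hadamard_transpose_mulVec [DecidableEq ι] (A : Matrix κ ι 𝕜) (x : ι → 𝕜) :
    star x ⬝ᵥ (((Aᴴ * A) ⊙ (Aᴴ * A)ᵀ) *ᵥ x) =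
      trace ((A * diagonal x * Aᴴ)ᴴ * (A * diagonal x * Aᴴ)) := by
  rw [dotProduct_mulVec, dotProduct_vecMul_hadamard, transpose_mul, transpose_transpose,
    diagonal_transpose]
  simp only [conjTranspose_mul, conjTranspose_conjTranspose, diagonal_conjTranspose,
    Matrix.mul_assoc]
  rw [trace_mul_comm A]
  simp only [Matrix.mul_assoc]

theorem posSemidef_hadamard_transpose_sub_smul_vecMulVec_diag (A : Matrix κ ι 𝕜) :
    ((Aᴴ * A) ⊙ (Aᴴ * A)ᵀ -
      (Fintype.card κ : 𝕜)⁻¹ • vecMulVec (Aᴴ * A).diag (Aᴴ * A).diag).PosSemidef := by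
  classical
  have hM := isHermitian_conjTranspose_mul_self A
  refine .of_dotProduct_mulVec_nonneg ?_ fun x ↦ ?_
  · refine (hM.hadamard hM.transpose).sub (IsHermitian.smul ?_ (IsSelfAdjoint.natCast _).inv₀)
    simpa [hM.star_diag] using (posSemidef_vecMulVec_star_self (Aᴴ * A).diag).isHermitian
  · rw [sub_mulVec, dotProduct_sub, smul_mulVec, dotProduct_smul,
      hM.star_dotProduct_vecMulVec_diag_mulVec, star_dotProduct_hadamard_transpose_mulVec,
      diag_conjTranspose_mul_self_dotProduct, smul_eq_mul, sub_nonneg]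
    exact inv_card_mul_star_trace_mul_trace_le_trace_conjTranspose_mul_self _

open scoped MatrixOrder in
lemma PosSemidef.exists_eq_conjTranspose_mul_self {M : Matrix ι ι 𝕜} (hM : M.PosSemidef) :
    ∃ S : Matrix ι ι 𝕜, M = Sᴴ * S := by
  classical
  refine ⟨CFC.sqrt M, ?_⟩
  rw [← star_eq_conjTranspose, (CFC.sqrt_nonneg M).isSelfAdjoint.star_eq,
    CFC.sqrt_mul_sqrt_self M hM.nonneg]

theorem PosSemidef.hadamard_transpose_sub_smul_vecMulVec_diag {M : Matrix ι ι 𝕜}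
    (hM : M.PosSemidef) :
    (M ⊙ Mᵀ - (Fintype.card ι : 𝕜)⁻¹ • vecMulVec M.diag M.diag).PosSemidef := by
  obtain ⟨S, rfl⟩ := hM.exists_eq_conjTranspose_mul_self
  exact posSemidef_hadamard_transpose_sub_smul_vecMulVec_diag S

end Matrix

theorem schur_variant (n : ℕ) (M : Matrix (Fin n) (Fin n) ℂ) (hM : M.PosSemidef) :
    Matrix.PosSemidef (Matrix.of fun j k : Fin n =>
      ((‖M j k‖) ^ 2 : ℂ) - (1 / (n : ℂ)) * M j j * M k k) := by
  have hentries : (of fun j k : Fin n => ((‖M j k‖) ^ 2 : ℂ) - (1 / (n : ℂ)) * M j j * M k k) =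
      M ⊙ Mᵀ - (Fintype.card (Fin n) : ℂ)⁻¹ • vecMulVec M.diag M.diag := by
    ext j k
    rw [of_apply, Matrix.sub_apply, Matrix.smul_apply, hM.isHermitian.hadamard_transpose_apply]
    simp [vecMulVec_apply, mul_assoc]
  rw [hentries]
  exact hM.hadamard_transpose_sub_smul_vecMulVec_diag
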